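/- For all vectors a, b and nonzero vectors w, z in a complex inner product space, one has |⟨a,w⟩⟨w,b⟩/‖w‖² + ⟨a,z⟩⟨z,b⟩/‖z‖² − 2⟨a,w⟩⟨w,z⟩⟨z,b⟩/(‖w‖²‖z‖²)| ≤ (1/2)(|⟨a,b⟩| + ‖a‖‖b‖). -/

import Mathlib

/-
The expression is half of `⟪a, b⟫ - ⟪a, R_w (R_z b)⟫`, where `R_v` is the reflection in the line
through `v`, i.e. `R_v x = 2 (⟪v, x⟫ / ‖v‖²) v - x`. Since `R_w ∘ R_z` is an isometry, Cauchy–Schwarz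
bounds `‖⟪a, R_w (R_z b)⟫‖` by `‖a‖ ‖b‖`.
-/

local notation "⟪" x ", " y "⟫" => @inner ℂ _ _ x y

open Submodule

section

variable {𝕜 E : Type*} [RCLike 𝕜] [NormedAddCommGroup E] [InnerProductSpace 𝕜 E]

theorem inner_reflection_singleton_reflection_singleton (a b w z : E) :
    inner 𝕜 a (reflection (𝕜 ∙ w) (reflection (𝕜 ∙ z) b)) =
      4 * inner 𝕜 a w * inner 𝕜 w z * inner 𝕜 z b / ((‖w‖ : 𝕜) ^ 2 * (‖z‖ : 𝕜) ^ 2) -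
        2 * inner 𝕜 a w * inner 𝕜 w b / (‖w‖ : 𝕜) ^ 2 -
        2 * inner 𝕜 a z * inner 𝕜 z b / (‖z‖ : 𝕜) ^ 2 + inner 𝕜 a b := by
  simp only [reflection_singleton_apply, inner_sub_right, inner_smul_right, two_smul,
    inner_add_right]
  ring

theorem norm_inner_sub_inner_linearIsometry_le {F : Type*} [NormedAddCommGroup F]
    [InnerProductSpace 𝕜 F] (T : F →ₗᵢ[𝕜] F) (a b : F) :
    ‖inner 𝕜 a b - inner 𝕜 a (T b)‖ ≤ ‖inner 𝕜 a b‖ + ‖a‖ * ‖b‖ :=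
  calc ‖inner 𝕜 a b - inner 𝕜 a (T b)‖ ≤ ‖inner 𝕜 a b‖ + ‖inner 𝕜 a (T b)‖ := norm_sub_le _ _
    _ ≤ ‖inner 𝕜 a b‖ + ‖a‖ * ‖T b‖ := by gcongr; exact norm_inner_le_norm a (T b)
    _ = ‖inner 𝕜 a b‖ + ‖a‖ * ‖b‖ := by rw [T.norm_map]

end

theorem stmt_19_general {X : Type*} [NormedAddCommGroup X] [InnerProductSpace ℂ X]
    (a b w z : X) :
    ‖⟪a, w⟫ * ⟪w, b⟫ / (‖w‖ : ℂ) ^ 2 + ⟪a, z⟫ * ⟪z, b⟫ / (‖z‖ : ℂ) ^ 2 -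
        2 * ⟪a, w⟫ * ⟪w, z⟫ * ⟪z, b⟫ / ((‖w‖ : ℂ) ^ 2 * (‖z‖ : ℂ) ^ 2)‖ ≤
      (1 / 2) * (‖⟪a, b⟫‖ + ‖a‖ * ‖b‖) := by
  let T : X →ₗᵢ[ℂ] X :=
    ((reflection (ℂ ∙ z)).trans (reflection (ℂ ∙ w))).toLinearIsometry
  have hT : ⟪a, w⟫ * ⟪w, b⟫ / (‖w‖ : ℂ) ^ 2 + ⟪a, z⟫ * ⟪z, b⟫ / (‖z‖ : ℂ) ^ 2 -
        2 * ⟪a, w⟫ * ⟪w, z⟫ * ⟪z, b⟫ / ((‖w‖ : ℂ) ^ 2 * (‖z‖ : ℂ) ^ 2) =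
      (⟪a, b⟫ - ⟪a, T b⟫) / 2 := by
    simp only [T, LinearIsometryEquiv.coe_toLinearIsometry, LinearIsometryEquiv.coe_trans,
      Function.comp_apply, inner_reflection_singleton_reflection_singleton,
      RCLike.ofReal_eq_complex_ofReal]
    ring
  rw [hT, norm_div, RCLike.norm_two]
  linarith [norm_inner_sub_inner_linearIsometry_le T a b]

theorem stmt_19 {X : Type*} [NormedAddCommGroup X] [InnerProductSpace ℂ X]
    (a b w z : X) (hw : w ≠ 0) (hz : z ≠ 0) :
    ‖⟪a, w⟫ * ⟪w, b⟫ / (‖w‖ : ℂ) ^ 2 + ⟪a, z⟫ * ⟪z, b⟫ / (‖z‖ : ℂ) ^ 2 -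
        2 * ⟪a, w⟫ * ⟪w, z⟫ * ⟪z, b⟫ / ((‖w‖ : ℂ) ^ 2 * (‖z‖ : ℂ) ^ 2)‖ ≤
      (1 / 2) * (‖⟪a, b⟫‖ + ‖a‖ * ‖b‖) :=
  stmt_19_general a b w z
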